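/- Let X be a Banach space and S = (X_k)_{k≥1} closed subspaces. The following are equivalent: (1) S is a representing system of subspaces in X; (2) there exist α ∈ (0,1), B > 0 with Θ_S(x, α‖x‖) ≤ B‖x‖ for all x; (3) Θ*_S(x) < ∞ for all x ∈ X; (4) sup{Θ*_S(x) : ‖x‖ ≤ 1} < ∞. -/

import Mathlib

/-!
(1) ⇒ (3): a convergent expansion has bounded partial sums. (3) ⇒ (4): `Θ*` is subadditive,
positively homogeneous and has closed sublevel sets, so by Baire's theorem some sublevel set
contains a ball, and translating and rescaling that ball bounds `Θ*` on the unit ball.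
(4) ⇒ (2) is rescaling. (2) ⇒ (1): approximating the successive residuals of `x` gives finite
expansions with partial sums `O(αᵐ)`; superposed coordinatewise they converge in each closed
`X k`, and Tannery's theorem shows that the resulting series sums to `x`.
-/

open Filter Finset
open scoped ENNReal

variable {E : Type*} [NormedAddCommGroup E] [NormedSpace ℝ E]

/-- For a finite tuple `P = (x_0, …, x_{n-1})` with `x_k ∈ X_k`,
`Θ_S(P) = max_k ‖x_0 + ⋯ + x_k‖` (as an extended nonnegative real). -/
noncomputable def ThetaP (n : ℕ) (f : ℕ → E) : ℝ≥0∞ :=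
  (Finset.range n).sup fun k => ENNReal.ofReal ‖∑ j ∈ Finset.range (k + 1), f j‖

/-- `Θ_S(x, ε) = inf {Θ_S(P) : ‖Σ(P) − x‖ ≤ ε}` (infimum over the empty set is `∞`). -/
noncomputable def Theta (X : ℕ → Submodule ℝ E) (x : E) (ε : ℝ) : ℝ≥0∞ :=
  ⨅ p : {p : ℕ × (ℕ → E) // (∀ k < p.1, p.2 k ∈ X k) ∧
      ‖(∑ j ∈ Finset.range p.1, p.2 j) - x‖ ≤ ε}, ThetaP p.1.1 p.1.2

/-- `Θ*_S(x) = sup_{ε > 0} Θ_S(x, ε) = lim_{ε → 0+} Θ_S(x, ε)`. -/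
noncomputable def ThetaStar (X : ℕ → Submodule ℝ E) (x : E) : ℝ≥0∞ :=
  ⨆ ε : {ε : ℝ // 0 < ε}, Theta X x ε

/-- `S = (X_k)` is a representing system of subspaces. -/
def IsRSS (X : ℕ → Submodule ℝ E) : Prop :=
  ∀ x : E, ∃ f : ℕ → E, (∀ k, f k ∈ X k) ∧
    Tendsto (fun n => ∑ k ∈ Finset.range n, f k) atTop (nhds x)

open Topology

section Series

variable {G : Type*} [NormedAddCommGroup G]

theorem norm_iterate_sub_le {T : G → G} {α : ℝ} (hα : 0 ≤ α)
    (hT : ∀ z, ‖z - T z‖ ≤ α * ‖z‖) (x : G) (m : ℕ) :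
    ‖(fun z => z - T z)^[m] x‖ ≤ α ^ m * ‖x‖ := by
  induction m with
  | zero => simp
  | succ m ih =>
    rw [Function.iterate_succ_apply', pow_succ', mul_assoc]
    exact (hT _).trans (by gcongr)

theorem hasSum_iterate_sub [CompleteSpace G] {T : G → G} {α : ℝ} (hα₀ : 0 ≤ α) (hα₁ : α < 1)
    (hT : ∀ z, ‖z - T z‖ ≤ α * ‖z‖) (x : G) :
    HasSum (fun m => T ((fun z => z - T z)^[m] x)) x := by
  set r : ℕ → G := fun m => (fun z => z - T z)^[m] x
  have hr : ∀ m, ‖r m‖ ≤ α ^ m * ‖x‖ := norm_iterate_sub_le hα₀ hT x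
  have hstep : ∀ m, T (r m) = r m - r (m + 1) := fun m => by
    simp only [r, Function.iterate_succ_apply', sub_sub_cancel]
  have hsummable : Summable fun m => T (r m) := by
    refine (((summable_geometric_of_lt_one hα₀ hα₁).mul_right ‖x‖).mul_left (1 + α)).of_norm_bounded
      fun m => ?_
    calc ‖T (r m)‖ = ‖r m - (r m - T (r m))‖ := by rw [sub_sub_cancel]
      _ ≤ ‖r m‖ + α * ‖r m‖ := (norm_sub_le _ _).trans (by gcongr; exact hT _)
      _ ≤ (1 + α) * (α ^ m * ‖x‖) := by rw [← one_add_mul]; gcongr; exact hr m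
  have hr0 : Tendsto r atTop (𝓝 0) := squeeze_zero_norm hr <| by
    simpa using (tendsto_pow_atTop_nhds_zero_of_lt_one hα₀ hα₁).mul_const ‖x‖
  rw [hsummable.hasSum_iff_tendsto_nat]
  simp_rw [hstep, Finset.sum_range_sub']
  simpa [r] using (tendsto_const_nhds (x := x)).sub hr0

theorem tendsto_sum_range_tsum {g : ℕ → ℕ → G} {s : ℕ → G} {c : ℕ → ℝ} [CompleteSpace G]
    (hc : Summable c) (hbd : ∀ m n, ‖∑ k ∈ range n, g m k‖ ≤ c m)
    (hs : ∀ m, Tendsto (fun n => ∑ k ∈ range n, g m k) atTop (𝓝 (s m))) :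
    Tendsto (fun n => ∑ k ∈ range n, ∑' m, g m k) atTop (𝓝 (∑' m, s m)) := by
  have hterm : ∀ k, Summable fun m => g m k := fun k =>
    (hc.mul_left 2).of_norm_bounded fun m => by
      rw [← Finset.sum_range_succ_sub_sum (g m)]
      exact (norm_sub_le _ _).trans (by linarith [hbd m (k + 1), hbd m k])
  refine (tendsto_tsum_of_dominated_convergence hc hs (.of_forall fun n m => hbd m n)).congr
    fun n => ?_
  exact Summable.tsum_finsetSum fun k _ => hterm k

end Series

section ThetaP

variable {G : Type*} [NormedAddCommGroup G]

theorem ofReal_norm_sum_range_le_thetaP {n j : ℕ} (f : ℕ → G) (hj : j ≤ n) :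
    ENNReal.ofReal ‖∑ k ∈ range j, f k‖ ≤ ThetaP n f := by
  cases j with
  | zero => simp
  | succ j =>
    exact Finset.le_sup (f := fun k => ENNReal.ofReal ‖∑ i ∈ range (k + 1), f i‖)
      (mem_range.2 hj)

theorem thetaP_le_ofReal {n : ℕ} {f : ℕ → G} {R : ℝ}
    (h : ∀ j, ‖∑ k ∈ range j, f k‖ ≤ R) : ThetaP n f ≤ ENNReal.ofReal R :=
  Finset.sup_le fun k _ => ENNReal.ofReal_le_ofReal (h (k + 1))

theorem sum_range_indicator_Iio {M : Type*} [AddCommMonoid M] (n j : ℕ) (f : ℕ → M) :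
    ∑ k ∈ range j, (Set.Iio n).indicator f k = ∑ k ∈ range (min j n), f k := by
  rw [Finset.sum_indicator_eq_sum_filter]
  congr 1
  ext k
  simp

theorem ofReal_norm_sum_range_indicator_le_thetaP (n j : ℕ) (f : ℕ → G) :
    ENNReal.ofReal ‖∑ k ∈ range j, (Set.Iio n).indicator f k‖ ≤ ThetaP n f := by
  rw [sum_range_indicator_Iio]
  exact ofReal_norm_sum_range_le_thetaP f (min_le_right _ _)

end ThetaP

section Theta

variable {X : ℕ → Submodule ℝ E}

theorem indicator_Iio_mem {n : ℕ} {f : ℕ → E} (hf : ∀ k < n, f k ∈ X k) (k : ℕ) :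
    (Set.Iio n).indicator f k ∈ X k := by
  by_cases hk : k < n
  · simpa [Set.indicator_of_mem (Set.mem_Iio.2 hk)] using hf k hk
  · simp [Set.indicator_of_notMem (mt Set.mem_Iio.1 hk)]

theorem theta_le_thetaP {x : E} {ε : ℝ} {n : ℕ} {f : ℕ → E} (hf : ∀ k < n, f k ∈ X k)
    (hx : ‖∑ k ∈ range n, f k - x‖ ≤ ε) : Theta X x ε ≤ ThetaP n f :=
  iInf_le_of_le ⟨(n, f), hf, hx⟩ le_rfl

theorem theta_le_thetaStar {x : E} {ε : ℝ} (hε : 0 < ε) : Theta X x ε ≤ ThetaStar X x :=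
  le_iSup (fun ε : {ε : ℝ // 0 < ε} => Theta X x ε) ⟨ε, hε⟩

theorem theta_le_theta_of_norm_sub_le {x y : E} {ε δ : ℝ} (h : ‖y - x‖ ≤ δ) :
    Theta X x (ε + δ) ≤ Theta X y ε :=
  le_iInf fun p => theta_le_thetaP p.2.1 <| calc
    ‖∑ k ∈ range p.1.1, p.1.2 k - x‖ ≤ ‖∑ k ∈ range p.1.1, p.1.2 k - y‖ + ‖y - x‖ :=
      norm_sub_le_norm_sub_add_norm_sub _ _ _
    _ ≤ ε + δ := add_le_add p.2.2 h

theorem theta_add_le (x y : E) (ε δ : ℝ) :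
    Theta X (x + y) (ε + δ) ≤ Theta X x ε + Theta X y δ := by
  simp only [Theta]
  rw [ENNReal.iInf_add]
  refine le_iInf fun p => ?_
  rw [ENNReal.add_iInf]
  refine le_iInf fun q => ?_
  obtain ⟨⟨n, f⟩, hf, hfx⟩ := p
  obtain ⟨⟨m, g⟩, hg, hgy⟩ := q
  let N := max n m
  let h : ℕ → E := (Set.Iio n).indicator f + (Set.Iio m).indicator g
  have hsum : ∑ k ∈ range N, h k = ∑ k ∈ range n, f k + ∑ k ∈ range m, g k := by
    simp only [h, Pi.add_apply, Finset.sum_add_distrib, sum_range_indicator_Iio,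
      min_eq_right (le_max_left n m), min_eq_right (le_max_right n m), N]
  have hhx : ‖∑ k ∈ range N, h k - (x + y)‖ ≤ ε + δ := by
    rw [hsum, add_sub_add_comm]
    exact (norm_add_le _ _).trans (add_le_add hfx hgy)
  refine (theta_le_thetaP (fun k _ => add_mem (indicator_Iio_mem hf k) (indicator_Iio_mem hg k))
    hhx).trans (Finset.sup_le fun k _ => ?_)
  calc ENNReal.ofReal ‖∑ i ∈ range (k + 1), h i‖
      ≤ ENNReal.ofReal ‖∑ i ∈ range (k + 1), (Set.Iio n).indicator f i‖ +
        ENNReal.ofReal ‖∑ i ∈ range (k + 1), (Set.Iio m).indicator g i‖ := by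
        rw [← ENNReal.ofReal_add (norm_nonneg _) (norm_nonneg _)]
        refine ENNReal.ofReal_le_ofReal ?_
        simpa only [h, Pi.add_apply, Finset.sum_add_distrib] using norm_add_le _ _
    _ ≤ ThetaP n f + ThetaP m g := add_le_add
        (ofReal_norm_sum_range_indicator_le_thetaP _ _ _)
        (ofReal_norm_sum_range_indicator_le_thetaP _ _ _)

theorem theta_smul_le (x : E) (ε : ℝ) {c : ℝ} (hc : 0 ≤ c) :
    Theta X (c • x) (c * ε) ≤ ENNReal.ofReal c * Theta X x ε := by
  rcases hc.eq_or_lt with rfl | hc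
  · simp only [zero_smul, zero_mul, ENNReal.ofReal_zero]
    exact (theta_le_thetaP (n := 0) (f := 0) (by simp) (by simp)).trans (by simp [ThetaP])
  conv_rhs => rw [Theta]
  rw [ENNReal.mul_iInf_of_ne (by simpa using hc) ENNReal.ofReal_ne_top]
  refine le_iInf fun ⟨⟨n, f⟩, hf, hfx⟩ => ?_
  refine (theta_le_thetaP (n := n) (f := c • f) (fun k hk => Submodule.smul_mem _ c (hf k hk))
    ?_).trans (Finset.sup_le fun k hk => ?_)
  · simp only [Pi.smul_apply, ← Finset.smul_sum, ← smul_sub, norm_smul, Real.norm_of_nonneg hc.le]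
    exact mul_le_mul_of_nonneg_left hfx hc.le
  · simp only [Pi.smul_apply, ← Finset.smul_sum, norm_smul, Real.norm_of_nonneg hc.le,
      ENNReal.ofReal_mul hc.le]
    gcongr
    exact ofReal_norm_sum_range_le_thetaP f (mem_range.1 hk)

theorem thetaStar_add_le (x y : E) : ThetaStar X (x + y) ≤ ThetaStar X x + ThetaStar X y :=
  iSup_le fun ⟨ε, hε⟩ => calc
    Theta X (x + y) ε = Theta X (x + y) (ε / 2 + ε / 2) := by rw [add_halves]
    _ ≤ Theta X x (ε / 2) + Theta X y (ε / 2) := theta_add_le _ _ _ _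
    _ ≤ ThetaStar X x + ThetaStar X y :=
      add_le_add (theta_le_thetaStar (half_pos hε)) (theta_le_thetaStar (half_pos hε))

theorem thetaStar_smul_le (x : E) {c : ℝ} (hc : 0 < c) :
    ThetaStar X (c • x) ≤ ENNReal.ofReal c * ThetaStar X x :=
  iSup_le fun ⟨ε, hε⟩ => calc
    Theta X (c • x) ε = Theta X (c • x) (c * (ε / c)) := by rw [mul_div_cancel₀ _ hc.ne']
    _ ≤ ENNReal.ofReal c * Theta X x (ε / c) := theta_smul_le _ _ hc.le
    _ ≤ ENNReal.ofReal c * ThetaStar X x := by gcongr; exact theta_le_thetaStar (div_pos hε hc)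

theorem isClosed_setOf_thetaStar_le (c : ℝ≥0∞) : IsClosed {x : E | ThetaStar X x ≤ c} := by
  refine isClosed_of_closure_subset fun x hx =>
    show ThetaStar X x ≤ c from iSup_le fun ⟨ε, hε⟩ => ?_
  obtain ⟨y, hy, hxy⟩ := Metric.mem_closure_iff.1 hx (ε / 2) (half_pos hε)
  calc Theta X x ε = Theta X x (ε / 2 + ε / 2) := by rw [add_halves]
    _ ≤ Theta X y (ε / 2) := theta_le_theta_of_norm_sub_le (by rw [← dist_eq_norm']; exact hxy.le)
    _ ≤ ThetaStar X y := theta_le_thetaStar (half_pos hε)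
    _ ≤ c := hy

end Theta

section Equivalences

variable {X : ℕ → Submodule ℝ E}

theorem thetaStar_le_of_tendsto {x : E} {f : ℕ → E} {R : ℝ} (hf : ∀ k, f k ∈ X k)
    (hx : Tendsto (fun n => ∑ k ∈ range n, f k) atTop (𝓝 x))
    (hR : ∀ n, ‖∑ k ∈ range n, f k‖ ≤ R) : ThetaStar X x ≤ ENNReal.ofReal R :=
  iSup_le fun ⟨ε, hε⟩ => by
    obtain ⟨n, hn⟩ := Metric.tendsto_atTop.1 hx ε hε
    exact (theta_le_thetaP (fun k _ => hf k) (dist_eq_norm _ x ▸ (hn n le_rfl).le)).trans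
      (thetaP_le_ofReal hR)

theorem IsRSS.thetaStar_ne_top (h : IsRSS X) (x : E) : ThetaStar X x ≠ ⊤ := by
  obtain ⟨f, hf, hx⟩ := h x
  obtain ⟨R, hR⟩ := isBounded_iff_forall_norm_le.1 hx.cauchySeq.isBounded_range
  exact ne_top_of_le_ne_top ENNReal.ofReal_ne_top
    (thetaStar_le_of_tendsto hf hx fun n => hR _ (Set.mem_range_self n))

theorem thetaStar_le_of_ball {x₀ : E} {r : ℝ} {c : ℝ≥0∞} (hr : 0 < r)
    (hball : ∀ z ∈ Metric.ball x₀ r, ThetaStar X z ≤ c) {y : E} (hy : ‖y‖ ≤ 1) :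
    ThetaStar X y ≤ ENNReal.ofReal (2 / r) * (c + ThetaStar X (-x₀)) := by
  have hz : x₀ + (r / 2) • y ∈ Metric.ball x₀ r := by
    rw [Metric.mem_ball, dist_eq_norm, add_sub_cancel_left, norm_smul,
      Real.norm_of_nonneg (by positivity)]
    nlinarith [norm_nonneg y]
  have hy_eq : y = (2 / r) • (x₀ + (r / 2) • y + -x₀) := by
    rw [add_neg_cancel_comm, smul_smul, div_mul_div_cancel₀ hr.ne', div_self two_ne_zero, one_smul]
  calc ThetaStar X y = ThetaStar X ((2 / r) • (x₀ + (r / 2) • y + -x₀)) := by rw [← hy_eq]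
    _ ≤ ENNReal.ofReal (2 / r) * ThetaStar X (x₀ + (r / 2) • y + -x₀) :=
      thetaStar_smul_le _ (by positivity)
    _ ≤ ENNReal.ofReal (2 / r) * (c + ThetaStar X (-x₀)) := by
      gcongr
      exact (thetaStar_add_le _ _).trans (by gcongr; exact hball _ hz)

theorem iSup_thetaStar_ne_top [CompleteSpace E] (h : ∀ x, ThetaStar X x ≠ ⊤) :
    (⨆ x : {x : E // ‖x‖ ≤ 1}, ThetaStar X x) ≠ ⊤ := by
  obtain ⟨n, x₀, hx₀⟩ := nonempty_interior_of_iUnion_of_closed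
    (fun n : ℕ => isClosed_setOf_thetaStar_le (X := X) n)
    (Set.iUnion_eq_univ_iff.2 fun x => (ENNReal.exists_nat_gt (h x)).imp fun _ => le_of_lt)
  obtain ⟨r, hr, hball⟩ := Metric.isOpen_iff.1 isOpen_interior x₀ hx₀
  have hball' : ∀ z ∈ Metric.ball x₀ r, ThetaStar X z ≤ n :=
    fun _ hz => hball.trans interior_subset hz
  refine ne_top_of_le_ne_top ?_ (iSup_le fun y => thetaStar_le_of_ball hr hball' y.2)
  exact ENNReal.mul_ne_top ENNReal.ofReal_ne_top
    (ENNReal.add_ne_top.2 ⟨ENNReal.natCast_ne_top n, h _⟩)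

theorem exists_theta_le_of_iSup_thetaStar_ne_top
    (h : (⨆ x : {x : E // ‖x‖ ≤ 1}, ThetaStar X x) ≠ ⊤) :
    ∃ α B : ℝ, α ∈ Set.Ioo (0 : ℝ) 1 ∧ 0 < B ∧
      ∀ x : E, Theta X x (α * ‖x‖) ≤ ENNReal.ofReal (B * ‖x‖) := by
  set M := ⨆ x : {x : E // ‖x‖ ≤ 1}, ThetaStar X x
  refine ⟨1 / 2, M.toReal + 1, by norm_num, by positivity, fun x => ?_⟩
  set u := ‖x‖⁻¹ • x
  have hu : ‖u‖ ≤ 1 := by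
    rw [norm_smul, norm_inv, norm_norm]
    exact inv_mul_le_one_of_le₀ le_rfl (norm_nonneg x)
  have hxu : ‖x‖ • u = x := by
    rcases eq_or_ne x 0 with rfl | hx
    · simp
    · exact smul_inv_smul₀ (norm_ne_zero_iff.2 hx) x
  calc Theta X x (1 / 2 * ‖x‖) = Theta X (‖x‖ • u) (‖x‖ * (1 / 2)) := by rw [hxu, mul_comm]
    _ ≤ ENNReal.ofReal ‖x‖ * Theta X u (1 / 2) := theta_smul_le _ _ (norm_nonneg x)
    _ ≤ ENNReal.ofReal ‖x‖ * M := by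
      gcongr
      exact (theta_le_thetaStar one_half_pos).trans
        (le_iSup (fun z : {z : E // ‖z‖ ≤ 1} => ThetaStar X z) ⟨u, hu⟩)
    _ ≤ ENNReal.ofReal ‖x‖ * ENNReal.ofReal (M.toReal + 1) := by
      gcongr
      exact (ENNReal.ofReal_toReal h).symm.le.trans (ENNReal.ofReal_le_ofReal (by linarith))
    _ = ENNReal.ofReal ((M.toReal + 1) * ‖x‖) := by
      rw [← ENNReal.ofReal_mul (norm_nonneg x), mul_comm]

end Equivalences

section Representation

variable {X : ℕ → Submodule ℝ E}

theorem exists_tendsto_of_theta_lt {x : E} {ε c : ℝ} (h : Theta X x ε < ENNReal.ofReal c) :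
    ∃ (f : ℕ → E) (s : E), (∀ k, f k ∈ X k) ∧ (∀ j, ‖∑ k ∈ range j, f k‖ ≤ c) ∧
      Tendsto (fun j => ∑ k ∈ range j, f k) atTop (𝓝 s) ∧ ‖s - x‖ ≤ ε := by
  obtain ⟨⟨⟨n, f⟩, hf, hfx⟩, hlt⟩ := iInf_lt_iff.1 h
  refine ⟨(Set.Iio n).indicator f, ∑ k ∈ range n, f k, indicator_Iio_mem hf,
    fun j => ?_, tendsto_atTop_of_eventually_const (i₀ := n) fun j hj => ?_, hfx⟩
  · exact ((ENNReal.ofReal_lt_ofReal_iff'.1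
      ((ofReal_norm_sum_range_indicator_le_thetaP n j f).trans_lt hlt)).1).le
  · rw [sum_range_indicator_Iio, min_eq_right hj]

theorem exists_tendsto_of_forall_theta_le {α B : ℝ} (hB : 0 ≤ B)
    (h : ∀ x : E, Theta X x (α * ‖x‖) ≤ ENNReal.ofReal (B * ‖x‖)) (x : E) :
    ∃ (f : ℕ → E) (s : E), (∀ k, f k ∈ X k) ∧ (∀ j, ‖∑ k ∈ range j, f k‖ ≤ (B + 1) * ‖x‖) ∧
      Tendsto (fun j => ∑ k ∈ range j, f k) atTop (𝓝 s) ∧ ‖x - s‖ ≤ α * ‖x‖ := by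
  rcases eq_or_ne x 0 with rfl | hx
  · exact ⟨0, 0, fun k => zero_mem _, by simp, by simp, by simp⟩
  have hx' : 0 < ‖x‖ := norm_pos_iff.2 hx
  have hlt : ENNReal.ofReal (B * ‖x‖) < ENNReal.ofReal ((B + 1) * ‖x‖) :=
    (ENNReal.ofReal_lt_ofReal_iff (by positivity)).2 (by linarith)
  obtain ⟨f, s, hf, hbd, hs, hsx⟩ := exists_tendsto_of_theta_lt ((h x).trans_lt hlt)
  exact ⟨f, s, hf, hbd, hs, norm_sub_rev x s ▸ hsx⟩

theorem isRSS_of_forall_theta_le [CompleteSpace E] (hX : ∀ k, IsClosed (X k : Set E)) {α B : ℝ}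
    (hα : α ∈ Set.Ioo (0 : ℝ) 1) (hB : 0 ≤ B)
    (h : ∀ x : E, Theta X x (α * ‖x‖) ≤ ENNReal.ofReal (B * ‖x‖)) : IsRSS X := by
  choose F S hFX hFbd hFS hS using exists_tendsto_of_forall_theta_le hB h
  intro x
  set r : ℕ → E := fun m => (fun z => z - S z)^[m] x
  have hr : ∀ m, ‖r m‖ ≤ α ^ m * ‖x‖ := norm_iterate_sub_le hα.1.le hS x
  have hc : Summable fun m => (B + 1) * (α ^ m * ‖x‖) :=
    ((summable_geometric_of_lt_one hα.1.le hα.2).mul_right ‖x‖).mul_left (B + 1)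
  have hbd : ∀ m n, ‖∑ k ∈ range n, F (r m) k‖ ≤ (B + 1) * (α ^ m * ‖x‖) := fun m n =>
    (hFbd _ n).trans (by gcongr; exact hr m)
  refine ⟨fun k => ∑' m, F (r m) k, fun k => tsum_mem (hX k) fun m => hFX _ k, ?_⟩
  rw [← (hasSum_iterate_sub hα.1.le hα.2 hS x).tsum_eq]
  exact tendsto_sum_range_tsum hc hbd fun m => hFS (r m)

end Representation

/-- In a Banach space, the following are equivalent: (1) `S` is a representing system of
subspaces; (2) `Θ_S(x, α‖x‖) ≤ B‖x‖` for some `α ∈ (0,1)`, `B > 0` and all `x`;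
(3) `Θ*_S(x) < ∞` for all `x`; (4) `sup_{‖x‖ ≤ 1} Θ*_S(x) < ∞`. -/
theorem rss_tfae [CompleteSpace E] (X : ℕ → Submodule ℝ E)
    (hX : ∀ k, IsClosed (X k : Set E)) :
    [IsRSS X,
     ∃ α B : ℝ, α ∈ Set.Ioo (0:ℝ) 1 ∧ 0 < B ∧
       ∀ x : E, Theta X x (α * ‖x‖) ≤ ENNReal.ofReal (B * ‖x‖),
     ∀ x : E, ThetaStar X x ≠ ⊤,
     (⨆ x : {x : E // ‖x‖ ≤ 1}, ThetaStar X x) ≠ ⊤].TFAE := by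
  tfae_have 1 → 3 := IsRSS.thetaStar_ne_top
  tfae_have 3 → 4 := iSup_thetaStar_ne_top
  tfae_have 4 → 2 := exists_theta_le_of_iSup_thetaStar_ne_top
  tfae_have 2 → 1 := fun ⟨_, _, hα, hB, h⟩ => isRSS_of_forall_theta_le hX hα hB.le h
  tfae_finish
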